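/- arXiv:0802.1590 — 2 statements merged into one kernel-verified Lean document; each statement's English description precedes it below -/
import Mathlib

section
/- Let ℓ be a positive odd integer and ζ ∈ ℂ a primitive ℓ-th root of unity. Then ∑_{t=1}^{ℓ-1} (-1)^t ζ^t / ([ℓ-t]_ζ! · [t]_ζ!) = (ζ - ζ^{-1})^ℓ · (1 - ℓ)/(2ℓ). -/
open Finset

noncomputable def qint (ζ : ℂ) (n : ℕ) : ℂ := (ζ ^ n - ζ⁻¹ ^ n) / (ζ - ζ⁻¹)

noncomputable def qfact (ζ : ℂ) (m : ℕ) : ℂ := ∏ n ∈ Finset.Icc 1 m, qint ζ n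

/-
Write `ζ^n - ζ⁻¹^n = ζ⁻¹^n ((ζ²)^n - 1)`. Since `ℓ` is odd, `ζ²` is again a primitive `ℓ`-th root
of unity and `∏_{n<ℓ} ζ⁻¹^n = 1`, so the cyclotomic evaluation `∏_{0<n<ℓ} (1 - ζ^{2n}) = ℓ` gives
`[ℓ-1]_ζ! = ℓ / (ζ - ζ⁻¹)^(ℓ-1)`. The reflection `[ℓ-n]_ζ = -[n]_ζ` then splits this factorial as
`[ℓ-1]_ζ! = (-1)^(t-1) [ℓ-t]_ζ! [t-1]_ζ!`, which turns the `t`-th summand into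
`-(ζ - ζ⁻¹)^ℓ / ℓ · ζ^t / (ζ^t - ζ⁻¹^t)`. Finally the summands at `t` and `ℓ - t` of
`∑ ζ^t / (ζ^t - ζ⁻¹^t)` add up to `1`, so that sum is `(ℓ - 1) / 2`.
-/

section Field

variable {K : Type*} [Field K] {ζ : K}

theorem pow_eq_inv_pow_of_pow_add_eq_one {m n : ℕ} (h : ζ ^ (m + n) = 1) : ζ ^ m = ζ⁻¹ ^ n := by
  rw [inv_pow]
  exact eq_inv_of_mul_eq_one_left (by rwa [← pow_add])

theorem pow_sub_inv_pow_eq_neg_of_pow_add_eq_one {m n : ℕ} (h : ζ ^ (m + n) = 1) :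
    ζ ^ m - ζ⁻¹ ^ m = -(ζ ^ n - ζ⁻¹ ^ n) := by
  rw [pow_eq_inv_pow_of_pow_add_eq_one h,
    ← pow_eq_inv_pow_of_pow_add_eq_one (n := m) (by rwa [add_comm])]
  ring

theorem pow_sub_inv_pow_eq_inv_pow_mul (hζ : ζ ≠ 0) (n : ℕ) :
    ζ ^ n - ζ⁻¹ ^ n = ζ⁻¹ ^ n * ((ζ ^ 2) ^ n - 1) := by
  rw [← pow_mul, mul_comm, pow_mul, inv_pow]
  field_simp
  ring

namespace IsPrimitiveRoot

variable {ℓ : ℕ}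

theorem pow_sub_inv_pow_ne_zero (hζ : IsPrimitiveRoot ζ ℓ) (hodd : Odd ℓ) {t : ℕ}
    (ht : 0 < t) (htℓ : t < ℓ) : ζ ^ t - ζ⁻¹ ^ t ≠ 0 := by
  have hζ0 := hζ.ne_zero hodd.pos.ne'
  rw [pow_sub_inv_pow_eq_inv_pow_mul hζ0]
  exact mul_ne_zero (pow_ne_zero _ (inv_ne_zero hζ0))
    (sub_ne_zero.2 ((hζ.pow_of_coprime 2 hodd.coprime_two_left).pow_ne_one_of_pos_of_lt
      ht.ne' htℓ))

theorem prod_pow_sub_inv_pow (hζ : IsPrimitiveRoot ζ ℓ) (hodd : Odd ℓ) :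
    ∏ n ∈ Icc 1 (ℓ - 1), (ζ ^ n - ζ⁻¹ ^ n) = ℓ := by
  have hω := hζ.pow_of_coprime 2 hodd.coprime_two_left
  obtain ⟨k, rfl⟩ := hodd
  have hsum : ∑ n ∈ Icc 1 (2 * k), n = (2 * k + 1) * k := by
    rw [← Ico_add_one_right_eq_Icc, sum_Ico_eq_sum_range, Nat.add_sub_cancel, sum_add_distrib,
      sum_range_id, sum_const, card_range, smul_eq_mul, mul_one, mul_assoc,
      Nat.mul_div_cancel_left _ two_pos]
    obtain _ | k := k
    · rfl
    · rw [show 2 * (k + 1) - 1 = 2 * k + 1 by omega]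
      ring
  rw [prod_congr rfl fun n _ => pow_sub_inv_pow_eq_inv_pow_mul (hζ.ne_zero (by omega)) n,
    prod_mul_distrib, prod_pow_eq_pow_sum, Nat.add_sub_cancel, hsum, pow_mul, inv_pow,
    hζ.pow_eq_one, inv_one, one_pow, one_mul]
  have := hω.prod_pow_sub_one_eq_order
  rw [(even_two_mul k).neg_one_pow, one_mul] at this
  rw [← Ico_add_one_right_eq_Icc, prod_Ico_eq_prod_range, Nat.add_sub_cancel]
  simpa [add_comm] using this

theorem two_mul_sum_pow_div_pow_sub_inv_pow (hζ : IsPrimitiveRoot ζ ℓ) (hodd : Odd ℓ) :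
    2 * ∑ t ∈ Icc 1 (ℓ - 1), ζ ^ t / (ζ ^ t - ζ⁻¹ ^ t) = ℓ - 1 := by
  set f : ℕ → K := fun t => ζ ^ t / (ζ ^ t - ζ⁻¹ ^ t)
  have hpair : ∀ t ∈ Icc 1 (ℓ - 1), f t + f (ℓ - t) = 1 := by
    intro t ht
    rw [mem_Icc] at ht
    have hℓ : ζ ^ (ℓ - t + t) = 1 := by rw [Nat.sub_add_cancel (by omega), hζ.pow_eq_one]
    simp only [f]
    rw [pow_sub_inv_pow_eq_neg_of_pow_add_eq_one hℓ, pow_eq_inv_pow_of_pow_add_eq_one hℓ, div_neg,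
      ← sub_eq_add_neg, ← sub_div,
      div_self (hζ.pow_sub_inv_pow_ne_zero hodd (by omega) (by omega))]
  have hreflect : ∑ t ∈ Icc 1 (ℓ - 1), f (ℓ - t) = ∑ t ∈ Icc 1 (ℓ - 1), f t :=
    sum_nbij' (ℓ - ·) (ℓ - ·) (fun t ht => by simp only [mem_Icc] at *; omega)
      (fun t ht => by simp only [mem_Icc] at *; omega)
      (fun t ht => by simp only [mem_Icc] at *; omega)
      (fun t ht => by simp only [mem_Icc] at *; omega) (fun _ _ => rfl)
  calc 2 * ∑ t ∈ Icc 1 (ℓ - 1), f t = ∑ t ∈ Icc 1 (ℓ - 1), (f t + f (ℓ - t)) := by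
        rw [sum_add_distrib, hreflect, two_mul]
    _ = ℓ - 1 := by
        rw [sum_congr rfl hpair, sum_const, Nat.card_Icc, nsmul_one, Nat.add_sub_cancel,
          Nat.cast_pred hodd.pos]

end IsPrimitiveRoot

end Field

theorem qint_eq_neg_of_pow_add_eq_one {ζ : ℂ} {m n : ℕ} (h : ζ ^ (m + n) = 1) :
    qint ζ m = -qint ζ n := by
  rw [qint, qint, pow_sub_inv_pow_eq_neg_of_pow_add_eq_one h, neg_div]

theorem qfact_zero (ζ : ℂ) : qfact ζ 0 = 1 := rfl

theorem qfact_succ (ζ : ℂ) (n : ℕ) : qfact ζ (n + 1) = qfact ζ n * qint ζ (n + 1) :=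
  prod_Icc_succ_top (by omega) _

theorem qfact_eq_prod_div (ζ : ℂ) (m : ℕ) :
    qfact ζ m = (∏ n ∈ Icc 1 m, (ζ ^ n - ζ⁻¹ ^ n)) / (ζ - ζ⁻¹) ^ m := by
  simp only [qfact, qint, prod_div_distrib, prod_const, Nat.card_Icc, Nat.add_sub_cancel]

theorem neg_one_pow_mul_qfact_mul_qfact {ζ : ℂ} {a b : ℕ} (h : ζ ^ (a + b + 1) = 1) :
    (-1) ^ b * qfact ζ a * qfact ζ b = qfact ζ (a + b) := by
  induction b generalizing a with
  | zero => simp [qfact_zero]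
  | succ b ih =>
    have hrefl : qint ζ (a + 1) = -qint ζ (b + 1) :=
      qint_eq_neg_of_pow_add_eq_one (by rwa [show a + 1 + (b + 1) = a + (b + 1) + 1 by ring])
    have := ih (a := a + 1) (by rwa [show a + 1 + b + 1 = a + (b + 1) + 1 by ring])
    rw [qfact_succ, hrefl, show a + 1 + b = a + (b + 1) by ring] at this
    rw [← this, qfact_succ]
    ring

theorem IsPrimitiveRoot.qfact_pred {ζ : ℂ} {ℓ : ℕ} (hζ : IsPrimitiveRoot ζ ℓ) (hodd : Odd ℓ) :
    qfact ζ (ℓ - 1) = ℓ / (ζ - ζ⁻¹) ^ (ℓ - 1) := by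
  rw [qfact_eq_prod_div, hζ.prod_pow_sub_inv_pow hodd]

theorem IsPrimitiveRoot.neg_one_pow_mul_pow_div_qfact_mul_qfact {ζ : ℂ} {ℓ t : ℕ}
    (hζ : IsPrimitiveRoot ζ ℓ) (hodd : Odd ℓ) (ht : t ∈ Icc 1 (ℓ - 1)) :
    (-1) ^ t * ζ ^ t / (qfact ζ (ℓ - t) * qfact ζ t)
      = -((ζ - ζ⁻¹) ^ ℓ / ℓ) * (ζ ^ t / (ζ ^ t - ζ⁻¹ ^ t)) := by
  rw [mem_Icc] at ht
  obtain ⟨s, rfl⟩ : ∃ s, t = s + 1 := ⟨t - 1, by omega⟩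
  have hℓ : (ℓ : ℂ) ≠ 0 := Nat.cast_ne_zero.2 hodd.pos.ne'
  have hrefl := neg_one_pow_mul_qfact_mul_qfact (ζ := ζ) (a := ℓ - (s + 1)) (b := s)
    (by rw [show ℓ - (s + 1) + s + 1 = ℓ by omega, hζ.pow_eq_one])
  rw [show ℓ - (s + 1) + s = ℓ - 1 by omega, hζ.qfact_pred hodd] at hrefl
  have hsq : ((-1 : ℂ) ^ s) ^ 2 = 1 := by rw [← pow_mul, mul_comm, pow_mul]; norm_num
  have hprod : qfact ζ (ℓ - (s + 1)) * qfact ζ s = (-1) ^ s * (ℓ / (ζ - ζ⁻¹) ^ (ℓ - 1)) := by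
    linear_combination (-1) ^ s * hrefl - qfact ζ (ℓ - (s + 1)) * qfact ζ s * hsq
  rw [qfact_succ, qint, ← mul_assoc, hprod, ← pow_sub_one_mul hodd.pos.ne']
  field_simp
  ring

theorem sum_alternating_inv_qfact_general (ℓ : ℕ) (hodd : Odd ℓ) (ζ : ℂ)
    (hζ : IsPrimitiveRoot ζ ℓ) :
    ∑ t ∈ Finset.Icc 1 (ℓ - 1), (-1 : ℂ) ^ t * ζ ^ t / (qfact ζ (ℓ - t) * qfact ζ t)
      = (ζ - ζ⁻¹) ^ ℓ * (1 - ℓ) / (2 * ℓ) := by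
  have hsum := eq_div_of_mul_eq two_ne_zero
    ((mul_comm _ _).trans (hζ.two_mul_sum_pow_div_pow_sub_inv_pow hodd))
  rw [sum_congr rfl fun t ht => hζ.neg_one_pow_mul_pow_div_qfact_mul_qfact hodd ht, ← mul_sum,
    hsum]
  ring

theorem sum_alternating_inv_qfact (ℓ : ℕ) (hℓ : 0 < ℓ) (hodd : Odd ℓ) (ζ : ℂ)
    (hζ : IsPrimitiveRoot ζ ℓ) :
    ∑ t ∈ Finset.Icc 1 (ℓ - 1), (-1 : ℂ) ^ t * ζ ^ t / (qfact ζ (ℓ - t) * qfact ζ t)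
      = (ζ - ζ⁻¹) ^ ℓ * (1 - ℓ) / (2 * ℓ) :=
  sum_alternating_inv_qfact_general ℓ hodd ζ hζ
end

section
/- Let ℓ be a positive odd integer, ζ a primitive ℓ-th root of unity in ℂ, and define [n]_ζ = (ζ^n - ζ^{-n})/(ζ - ζ^{-1}). Then for all nonnegative integers a, b, the balanced Gaussian binomial satisfies [ℓa choose ℓb]_ζ = (a choose b) (the ordinary binomial coefficient), where [n choose m]_ζ = [n]_ζ [n-1]_ζ ⋯ [n-m+1]_ζ / [m]_ζ! is interpreted as the evaluation at q = ζ of the Laurent polynomial [n choose m]_q ∈ ℤ[q,q^{-1}]. -/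
/-- The balanced Gaussian binomial `[n choose k]_ζ`, i.e. the evaluation at `q = ζ ∈ ℂˣ` of the
Laurent polynomial `[n choose k]_q ∈ ℤ[q,q⁻¹]`, defined via the balanced Pascal recursion
`[n+1 choose k+1]_q = q^{-(k+1)} [n choose k+1]_q + q^{n-k} [n choose k]_q`. -/
noncomputable def qbinomC (ζ : ℂ) : ℕ → ℕ → ℂ
  | _, 0 => 1
  | 0, _ + 1 => 0
  | n + 1, k + 1 =>
      ζ⁻¹ ^ (k + 1) * qbinomC ζ n (k + 1) + ζ ^ (n - k) * qbinomC ζ n k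

lemma qbinomC_zero_right (ζ : ℂ) (n : ℕ) : qbinomC ζ n 0 = 1 := by
  cases n <;> rfl

lemma qbinomC_eq_zero (ζ : ℂ) : ∀ n k : ℕ, n < k → qbinomC ζ n k = 0 := by
  intro n
  induction n with
  | zero =>
    rintro (_ | k) h
    · omega
    · rfl
  | succ n ih =>
    rintro (_ | k) h
    · omega
    · show ζ⁻¹ ^ (k + 1) * qbinomC ζ n (k + 1) + ζ ^ (n - k) * qbinomC ζ n k = 0
      rw [ih (k + 1) (by omega), ih k (by omega)]
      ring

/-- Auxiliary renormalized Gaussian binomial whose row generating function is a product. -/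
noncomputable def dQ (ζ : ℂ) (n k : ℕ) : ℂ :=
  ζ ^ ((k : ℤ) * ((n : ℤ) - 1)) * qbinomC ζ n k

lemma dQ_zero_right (ζ : ℂ) (n : ℕ) : dQ ζ n 0 = 1 := by
  simp [dQ, qbinomC_zero_right]

lemma dQ_succ {ζ : ℂ} (hz : ζ ≠ 0) (n k : ℕ) :
    dQ ζ (n + 1) (k + 1) = dQ ζ n (k + 1) + ζ ^ (2 * n) * dQ ζ n k := by
  rcases le_or_gt k n with hkn | hkn
  · have hrec : qbinomC ζ (n + 1) (k + 1)
        = ζ⁻¹ ^ (k + 1) * qbinomC ζ n (k + 1) + ζ ^ (n - k) * qbinomC ζ n k := rfl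
    unfold dQ
    rw [hrec]
    have h1 : (ζ⁻¹ : ℂ) ^ (k + 1) = ζ ^ (-((k : ℤ) + 1)) := by
      rw [← zpow_natCast ζ⁻¹ (k + 1), inv_zpow, ← zpow_neg]
      push_cast
      ring_nf
    have h2 : ζ ^ (n - k) = ζ ^ ((n : ℤ) - (k : ℤ)) := by
      rw [← zpow_natCast ζ (n - k)]
      congr 1
      omega
    have h3 : ζ ^ (2 * n) = ζ ^ ((2 * n : ℕ) : ℤ) := by
      rw [zpow_natCast]
    rw [h1, h2, h3, mul_add, ← mul_assoc, ← mul_assoc, ← zpow_add₀ hz, ← zpow_add₀ hz,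
      ← mul_assoc, ← zpow_add₀ hz]
    have e1 : ((k : ℤ) + 1) * ((n : ℤ) + 1 - 1) + (-((k : ℤ) + 1))
        = ((k : ℤ) + 1) * ((n : ℤ) - 1) := by ring
    have e2 : ((k : ℤ) + 1) * ((n : ℤ) + 1 - 1) + ((n : ℤ) - (k : ℤ))
        = ((2 * n : ℕ) : ℤ) + (k : ℤ) * ((n : ℤ) - 1) := by push_cast; ring
    push_cast
    push_cast at e1 e2
    rw [e1, e2]
  · rw [dQ, dQ, dQ, qbinomC_eq_zero ζ (n + 1) (k + 1) (by omega),
      qbinomC_eq_zero ζ n (k + 1) (by omega), qbinomC_eq_zero ζ n k (by omega)]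
    ring

/-- The row generating function. -/
noncomputable def Qpoly (ζ : ℂ) (n : ℕ) : Polynomial ℂ :=
  ∏ i ∈ Finset.range n, (1 + Polynomial.C (ζ ^ (2 * i)) * Polynomial.X)

lemma coeff_Qpoly {ζ : ℂ} (hz : ζ ≠ 0) : ∀ n k : ℕ, (Qpoly ζ n).coeff k = dQ ζ n k := by
  intro n
  induction n with
  | zero =>
    rintro (_ | k)
    · simp [Qpoly, dQ_zero_right]
    · simp [Qpoly, dQ, Polynomial.coeff_one, qbinomC_eq_zero ζ 0 (k + 1) (by omega)]
  | succ n ih =>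
    have hstep : Qpoly ζ (n + 1)
        = Qpoly ζ n + Polynomial.C (ζ ^ (2 * n)) * (Qpoly ζ n * Polynomial.X) := by
      rw [Qpoly, Finset.prod_range_succ, ← Qpoly]
      ring
    rintro (_ | k)
    · rw [hstep]
      simp [Polynomial.coeff_mul_X_zero, ih 0, dQ_zero_right]
    · rw [hstep]
      rw [Polynomial.coeff_add, Polynomial.coeff_C_mul, Polynomial.coeff_mul_X,
        ih (k + 1), ih k, dQ_succ hz]

section main

variable {ℓ : ℕ} {ζ : ℂ}

lemma q_prim (hodd : Odd ℓ) (hζ : IsPrimitiveRoot ζ ℓ) : IsPrimitiveRoot (ζ ^ 2) ℓ :=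
  hζ.pow_of_coprime 2 (Nat.coprime_two_left.mpr hodd)

lemma Qpoly_ell (hℓ : 0 < ℓ) (hodd : Odd ℓ) (hζ : IsPrimitiveRoot ζ ℓ) :
    Qpoly ζ ℓ = 1 + Polynomial.X ^ ℓ := by
  classical
  have hq : IsPrimitiveRoot (ζ ^ 2) ℓ := q_prim hodd hζ
  have hz : ζ ≠ 0 := hζ.ne_zero hℓ.ne'
  have hqz : (ζ ^ 2 : ℂ) ≠ 0 := pow_ne_zero 2 hz
  -- η = (ζ²)⁻¹ is a primitive ℓ-th root of unity
  have hη : IsPrimitiveRoot ((ζ ^ 2)⁻¹) ℓ := hq.inv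
  set η : ℂ := (ζ ^ 2)⁻¹ with hηdef
  -- X^ℓ - 1 = ∏ i ∈ range ℓ, (X - C (η ^ i))
  have hroots : (Polynomial.X ^ ℓ - Polynomial.C (1 : ℂ)).roots
      = Polynomial.nthRoots ℓ (1 : ℂ) := rfl
  have hnth : Polynomial.nthRoots ℓ (1 : ℂ)
      = (Multiset.range ℓ).map (fun i => η ^ i) := by
    have := hη.nthRoots_eq (α := 1) (a := 1) (one_pow ℓ)
    simpa using this
  have hmonic : (Polynomial.X ^ ℓ - Polynomial.C (1 : ℂ)).Monic :=
    Polynomial.monic_X_pow_sub_C (1 : ℂ) hℓ.ne'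
  have hcard : Multiset.card (Polynomial.X ^ ℓ - Polynomial.C (1 : ℂ)).roots
      = (Polynomial.X ^ ℓ - Polynomial.C (1 : ℂ)).natDegree := by
    rw [hroots, hnth, Polynomial.natDegree_X_pow_sub_C]
    simp
  have hprod := Polynomial.prod_multiset_X_sub_C_of_monic_of_roots_card_eq hmonic hcard
  rw [hroots, hnth, Multiset.map_map] at hprod
  have hprodrange : ∏ i ∈ Finset.range ℓ, (Polynomial.X - Polynomial.C (η ^ i))
      = Polynomial.X ^ ℓ - Polynomial.C (1 : ℂ) := by
    rw [← hprod]
    rfl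
  -- compose with -X : ∏ (X + C (η^i)) = X^ℓ + 1
  have hcomp := congrArg (fun p : Polynomial ℂ => p.comp (-Polynomial.X)) hprodrange
  simp only [Polynomial.prod_comp, Polynomial.sub_comp, Polynomial.X_comp,
    Polynomial.C_comp, Polynomial.pow_comp] at hcomp
  have hneg : ((-Polynomial.X : Polynomial ℂ)) ^ ℓ = -(Polynomial.X ^ ℓ) := by
    rw [neg_pow, hodd.neg_one_pow]
    ring
  rw [hneg] at hcomp
  have hfac : ∀ i : ℕ, (-Polynomial.X - Polynomial.C (η ^ i))
      = -(Polynomial.X + Polynomial.C (η ^ i)) := fun i => by ring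
  have hprodneg : ∏ i ∈ Finset.range ℓ, (Polynomial.X + Polynomial.C (η ^ i))
      = Polynomial.X ^ ℓ + 1 := by
    have h2 : ∏ i ∈ Finset.range ℓ, (-(Polynomial.X + Polynomial.C (η ^ i)))
        = -(Polynomial.X ^ ℓ) - Polynomial.C (1 : ℂ) := by
      rw [← hcomp]
      exact Finset.prod_congr rfl fun i _ => (hfac i).symm
    have h3 : ∏ i ∈ Finset.range ℓ, (-(Polynomial.X + Polynomial.C (η ^ i)))
        = (-1 : Polynomial ℂ) ^ ℓ * ∏ i ∈ Finset.range ℓ, (Polynomial.X + Polynomial.C (η ^ i)) := by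
      calc ∏ i ∈ Finset.range ℓ, (-(Polynomial.X + Polynomial.C (η ^ i)))
          = ∏ i ∈ Finset.range ℓ,
              ((-1 : Polynomial ℂ) * (Polynomial.X + Polynomial.C (η ^ i))) := by
            exact Finset.prod_congr rfl fun i _ => by ring
        _ = (∏ _i ∈ Finset.range ℓ, (-1 : Polynomial ℂ))
              * ∏ i ∈ Finset.range ℓ, (Polynomial.X + Polynomial.C (η ^ i)) :=
            Finset.prod_mul_distrib
        _ = (-1 : Polynomial ℂ) ^ ℓ
              * ∏ i ∈ Finset.range ℓ, (Polynomial.X + Polynomial.C (η ^ i)) := by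
            rw [Finset.prod_const, Finset.card_range]
    rw [h3, hodd.neg_one_pow, neg_one_mul] at h2
    have h4 : -(Polynomial.X ^ ℓ) - Polynomial.C (1 : ℂ)
        = -((Polynomial.X : Polynomial ℂ) ^ ℓ + 1) := by
      rw [Polynomial.C_1]; ring
    rw [h4] at h2
    exact neg_injective h2
  -- now factor each 1 + (ζ²)^i X = (ζ²)^i * (X + η^i)
  have hfactor : ∀ i : ℕ, (1 + Polynomial.C (ζ ^ (2 * i)) * Polynomial.X)
      = Polynomial.C ((ζ ^ 2) ^ i) * (Polynomial.X + Polynomial.C (η ^ i)) := by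
    intro i
    have h1 : (ζ : ℂ) ^ (2 * i) = (ζ ^ 2) ^ i := by rw [pow_mul]
    have h2 : ((ζ ^ 2 : ℂ)) ^ i * η ^ i = 1 := by
      rw [hηdef, ← mul_pow, mul_inv_cancel₀ hqz, one_pow]
    rw [h1, mul_add, ← Polynomial.C_mul, h2, Polynomial.C_1]
    ring
  have hgauss : ∏ i ∈ Finset.range ℓ, ((ζ ^ 2 : ℂ)) ^ i = 1 := by
    rw [Finset.prod_pow_eq_pow_sum]
    rw [hq.pow_eq_one_iff_dvd]
    obtain ⟨m, hm⟩ := hodd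
    refine ⟨m, ?_⟩
    have hsum := Finset.sum_range_id_mul_two ℓ
    have h1 : ℓ - 1 = 2 * m := by omega
    refine Nat.eq_of_mul_eq_mul_right two_pos ?_
    rw [hsum, h1, hm]
    ring
  calc Qpoly ζ ℓ = ∏ i ∈ Finset.range ℓ,
        (Polynomial.C ((ζ ^ 2 : ℂ) ^ i) * (Polynomial.X + Polynomial.C (η ^ i))) := by
        rw [Qpoly]; exact Finset.prod_congr rfl fun i _ => hfactor i
    _ = (∏ i ∈ Finset.range ℓ, Polynomial.C ((ζ ^ 2 : ℂ) ^ i))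
          * ∏ i ∈ Finset.range ℓ, (Polynomial.X + Polynomial.C (η ^ i)) := by
        rw [Finset.prod_mul_distrib]
    _ = 1 + Polynomial.X ^ ℓ := by
        rw [← map_prod (Polynomial.C : ℂ →+* Polynomial ℂ) (fun i => (ζ ^ 2) ^ i)
            (Finset.range ℓ), hgauss, map_one, one_mul, hprodneg, add_comm]

lemma Qpoly_mul_ell (hℓ : 0 < ℓ) (hodd : Odd ℓ) (hζ : IsPrimitiveRoot ζ ℓ) (a : ℕ) :
    Qpoly ζ (ℓ * a) = (1 + Polynomial.X ^ ℓ) ^ a := by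
  induction a with
  | zero => simp [Qpoly]
  | succ a ih =>
    have hz : ζ ≠ 0 := hζ.ne_zero hℓ.ne'
    have hmul : ℓ * (a + 1) = ℓ * a + ℓ := by ring
    rw [hmul, Qpoly, Finset.prod_range_add, ← Qpoly, ih]
    have : ∀ i ∈ Finset.range ℓ,
        (1 + Polynomial.C (ζ ^ (2 * (ℓ * a + i))) * Polynomial.X)
          = (1 + Polynomial.C (ζ ^ (2 * i)) * Polynomial.X) := by
      intro i _
      congr 2
      have : ζ ^ (2 * (ℓ * a + i)) = (ζ ^ ℓ) ^ (2 * a) * ζ ^ (2 * i) := by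
        rw [← pow_mul, ← pow_add]
        congr 1
        ring
      rw [this, hζ.pow_eq_one, one_pow, one_mul]
    rw [Finset.prod_congr rfl this, ← Qpoly, Qpoly_ell hℓ hodd hζ]
    ring

end main

/-- Lusztig's identity: for `ζ` a primitive `ℓ`-th root of unity with `ℓ` odd,
`[ℓa choose ℓb]_ζ = (a.choose b)`. -/
theorem qbinom_mul_ell (ℓ : ℕ) (hℓ : 0 < ℓ) (hodd : Odd ℓ) (ζ : ℂ)
    (hζ : IsPrimitiveRoot ζ ℓ) (a b : ℕ) :
    qbinomC ζ (ℓ * a) (ℓ * b) = (a.choose b : ℂ) := by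
  have hz : ζ ≠ 0 := hζ.ne_zero hℓ.ne'
  -- the key coefficient computation
  have hd : dQ ζ (ℓ * a) (ℓ * b) = (a.choose b : ℂ) := by
    rw [← coeff_Qpoly hz, Qpoly_mul_ell hℓ hodd hζ]
    have hexp : (1 + Polynomial.X ^ ℓ : Polynomial ℂ) ^ a
        = Polynomial.expand ℂ ℓ ((1 + Polynomial.X) ^ a) := by
      rw [map_pow, map_add, map_one, Polynomial.expand_X]
    rw [hexp, Polynomial.coeff_expand hℓ]
    rw [if_pos ⟨b, rfl⟩, Nat.mul_div_cancel_left b hℓ]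
    exact Polynomial.coeff_one_add_X_pow ℂ a b
  -- the prefactor is 1 since its exponent is divisible by ℓ
  have hpref : ζ ^ (((ℓ * b : ℕ) : ℤ) * (((ℓ * a : ℕ) : ℤ) - 1)) = 1 := by
    rw [hζ.zpow_eq_one_iff_dvd]
    exact ⟨(b : ℤ) * (((ℓ * a : ℕ) : ℤ) - 1), by push_cast; ring⟩
  have := hd
  rw [dQ, hpref, one_mul] at this
  exact this
end
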